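/- arXiv:math/0001114 — 4 statements merged into one kernel-verified Lean document; each statement's English description precedes it below -/
import Mathlib

section
/- Let λ be a partition with at most n parts with λ_1 − λ_n ≤ ℓ and R a sequence of rectangles each restricted of level ℓ. Then for every ν ∈ C^ℓ(λ;R), every t ∈ CST(λ′), every 1 ≤ k < n, and every i ≥ ℓ, the modified vacancy number vanishes: P_i^{(k)}(ν,t) = 0. -/
open Classical

noncomputable section

namespace RiggedConf

/-- `Q_i(ρ) = Σ_j min(i, ρ_j)`, the number of cells in the first `i` columns of
the partition `ρ` (a partition is encoded as the multiset of its parts). -/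
def Qi (i : ℕ) (ρ : Multiset ℕ) : ℕ := (ρ.map (min i)).sum

/-- `m_i(ρ)`: the number of parts of `ρ` equal to `i`. -/
def mi (i : ℕ) (ρ : Multiset ℕ) : ℕ := ρ.count i

/-- `α_i(ρ)`: the size of the `i`-th column of `ρ`, i.e. the number of parts `≥ i`. -/
def colSize (i : ℕ) (ρ : Multiset ℕ) : ℕ := (ρ.filter (fun x => i ≤ x)).card

/-- A sequence of rectangles is a list of pairs `(μ_j, η_j)` (width, height).
`xiR R k` is the partition `ξ^{(k)}(R)` whose parts are the widths of the
rectangles of `R` of height exactly `k`. -/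
def xiR (R : List (ℕ × ℕ)) (k : ℕ) : Multiset ℕ :=
  ((R.filter (fun r => r.2 = k)).map (fun r => r.1) : List ℕ)

/-- `‖R‖ = Σ_{i<j} min(η_i,η_j) · min(μ_i,μ_j)`. -/
def normR (R : List (ℕ × ℕ)) : ℕ :=
  ∑ p ∈ Finset.range R.length, ∑ q ∈ Finset.Ioo p R.length,
    min (R.getD p (0, 0)).2 (R.getD q (0, 0)).2 *
      min (R.getD p (0, 0)).1 (R.getD q (0, 0)).1

/-- `lam` is a partition with at most `n` parts, `lam j` being the `j`-th part
(for `1 ≤ j ≤ n`; all later parts vanish). -/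
def IsShape (n : ℕ) (lam : ℕ → ℕ) : Prop :=
  (∀ i j, 1 ≤ i → i ≤ j → j ≤ n → lam j ≤ lam i) ∧ (∀ j, n < j → lam j = 0)

/-- A `(λ;R)`-configuration: a sequence `ν = (ν^{(1)}, ν^{(2)}, …)` of partitions
(with `ν^{(0)} = ∅` by convention) satisfying
`|ν^{(k)}| = Σ_{j>k} λ_j − Σ_a μ_a · max(η_a − k, 0)` for all `k ≥ 1`. -/
def IsConfig (n : ℕ) (lam : ℕ → ℕ) (R : List (ℕ × ℕ)) (ν : ℕ → Multiset ℕ) : Prop :=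
  ν 0 = 0 ∧ (∀ k, ∀ x ∈ ν k, 0 < x) ∧
  ∀ k, 1 ≤ k →
    ((ν k).sum : ℤ) =
      (∑ j ∈ Finset.Icc (k + 1) n, (lam j : ℤ)) -
        ((R.map (fun r => r.1 * (r.2 - k))).sum : ℤ)

/-- The vacancy numbers
`P_i^{(k)}(ν) = Q_i(ν^{(k-1)}) − 2 Q_i(ν^{(k)}) + Q_i(ν^{(k+1)}) + Q_i(ξ^{(k)}(R))`. -/
def vac (R : List (ℕ × ℕ)) (ν : ℕ → Multiset ℕ) (k i : ℕ) : ℤ :=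
  (Qi i (ν (k - 1)) : ℤ) - 2 * (Qi i (ν k) : ℤ) + (Qi i (ν (k + 1)) : ℤ) +
    (Qi i (xiR R k) : ℤ)

/-- Admissibility: all vacancy numbers are nonnegative. -/
def Admissible (R : List (ℕ × ℕ)) (ν : ℕ → Multiset ℕ) : Prop :=
  ∀ k i, 1 ≤ k → 1 ≤ i → 0 ≤ vac R ν k i

/-- A convenient finite bound: `|λ|`. -/
def bigB (n : ℕ) (lam : ℕ → ℕ) : ℕ := ∑ j ∈ Finset.Icc 1 n, lam j

/-- `cc(ν) = Σ_{k,i≥1} α_i^{(k)} (α_i^{(k)} − α_i^{(k+1)})`.  (All terms with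
`k > n` or `i > |λ|` vanish, so the sum below is the full sum.) -/
def ccNu (n : ℕ) (lam : ℕ → ℕ) (ν : ℕ → Multiset ℕ) : ℤ :=
  ∑ k ∈ Finset.Icc 1 n, ∑ i ∈ Finset.Icc 1 (bigB n lam),
    (colSize i (ν k) : ℤ) * ((colSize i (ν k) : ℤ) - (colSize i (ν (k + 1)) : ℤ))

/-- `|P| = Σ_{k,i≥1} m_i(ν^{(k)}) P_i^{(k)}(ν)`. -/
def Psum (n : ℕ) (lam : ℕ → ℕ) (R : List (ℕ × ℕ)) (ν : ℕ → Multiset ℕ) : ℤ :=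
  ∑ k ∈ Finset.Icc 1 n, ∑ i ∈ Finset.Icc 1 (bigB n lam),
    (mi i (ν k) : ℤ) * vac R ν k i

/-- The charge `c(ν) = ‖R‖ − cc(ν) − |P|` of a configuration. -/
def chargeNu (n : ℕ) (lam : ℕ → ℕ) (R : List (ℕ × ℕ)) (ν : ℕ → Multiset ℕ) : ℤ :=
  (normR R : ℤ) - ccNu n lam ν - Psum n lam R ν

/-- A rigging of `ν`: `J k i` is the multiset of labels attached to the parts of
`ν^{(k)}` that are equal to `i`; there are exactly `m_i(ν^{(k)})` labels, and each
label `x` satisfies `0 ≤ x ≤ P_i^{(k)}(ν)`. -/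
def IsRigging (R : List (ℕ × ℕ)) (ν : ℕ → Multiset ℕ)
    (J : ℕ → ℕ → Multiset ℕ) : Prop :=
  (∀ k i, (J k i).card = mi i (ν k)) ∧
  (∀ k i, ∀ x ∈ J k i, (x : ℤ) ≤ vac R ν k i)

/-- `|J|`: the sum of all labels of the rigging. -/
def Jwt (n : ℕ) (lam : ℕ → ℕ) (J : ℕ → ℕ → Multiset ℕ) : ℤ :=
  ∑ k ∈ Finset.Icc 1 n, ∑ i ∈ Finset.Icc 1 (bigB n lam), ((J k i).sum : ℤ)

/-- The charge `c(ν,J) = c(ν) + |J|` of a rigged configuration. -/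
def chargeRC (n : ℕ) (lam : ℕ → ℕ) (R : List (ℕ × ℕ)) (ν : ℕ → Multiset ℕ)
    (J : ℕ → ℕ → Multiset ℕ) : ℤ :=
  chargeNu n lam R ν + Jwt n lam J

/-- The cocharge `cc(ν,J) = cc(ν) + |J|` of a rigged configuration. -/
def ccRC (n : ℕ) (lam : ℕ → ℕ) (ν : ℕ → Multiset ℕ)
    (J : ℕ → ℕ → Multiset ℕ) : ℤ :=
  ccNu n lam ν + Jwt n lam J

/-- Membership in `RC(λ;R)`. -/
def RCmem (n : ℕ) (lam : ℕ → ℕ) (R : List (ℕ × ℕ)) (ν : ℕ → Multiset ℕ)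
    (J : ℕ → ℕ → Multiset ℕ) : Prop :=
  IsConfig n lam R ν ∧ Admissible R ν ∧ IsRigging R ν J

/-- `ℓ̃ = ℓ − (λ_1 − λ_n)`. -/
def ltil (n ℓ : ℕ) (lam : ℕ → ℕ) : ℕ := ℓ - (lam 1 - lam n)

/-- Column-strict tableaux `t` of shape `λ' = (λ_1−λ_n, …, λ_{n−1}−λ_n)ᵗ` over the
alphabet `{1, …, λ_1−λ_n}`: the `k`-th column of `t` has length `λ_k − λ_n`
(`1 ≤ k ≤ n−1`), with entry `t j k` in row `j`, column `k`; rows weakly increase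
and columns strictly increase; `t` vanishes outside its shape. -/
def IsCSTp (n : ℕ) (lam : ℕ → ℕ) (t : ℕ → ℕ → ℕ) : Prop :=
  (∀ j k, 1 ≤ j → 1 ≤ k → k ≤ n - 1 → j ≤ lam k - lam n →
      1 ≤ t j k ∧ t j k ≤ lam 1 - lam n) ∧
  (∀ j k, 1 ≤ j → 1 ≤ k → k ≤ n - 1 → j + 1 ≤ lam k - lam n → t j k < t (j + 1) k) ∧
  (∀ j k, 1 ≤ j → 1 ≤ k → k + 1 ≤ n - 1 → j ≤ lam (k + 1) - lam n →
      t j k ≤ t j (k + 1)) ∧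
  (∀ j k, j = 0 ∨ k = 0 ∨ n - 1 < k ∨ lam k - lam n < j → t j k = 0)

/-- The modified vacancy numbers
`P_i^{(k)}(ν,t) = P_i^{(k)}(ν) − Σ_{j=1}^{λ_k−λ_n} χ(i ≥ ℓ̃+t_{j,k})
                + Σ_{j=1}^{λ_{k+1}−λ_n} χ(i ≥ ℓ̃+t_{j,k+1})`. -/
def vacT (n ℓ : ℕ) (lam : ℕ → ℕ) (R : List (ℕ × ℕ)) (ν : ℕ → Multiset ℕ)
    (t : ℕ → ℕ → ℕ) (k i : ℕ) : ℤ :=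
  vac R ν k i
    - ∑ j ∈ Finset.Icc 1 (lam k - lam n),
        (if ltil n ℓ lam + t j k ≤ i then (1 : ℤ) else 0)
    + ∑ j ∈ Finset.Icc 1 (lam (k + 1) - lam n),
        (if ltil n ℓ lam + t j (k + 1) ≤ i then (1 : ℤ) else 0)

/-- Level-`ℓ` restriction for rigged configurations: all parts of all `ν^{(k)}`
are at most `ℓ`, and there is a tableau `t ∈ CST(λ')` such that every label of a
string of length `i` in `(ν,J)^{(k)}` is at most `P_i^{(k)}(ν,t)` (in particular
`P_i^{(k)}(ν,t) ≥ 0`; this encodes `x_i^{(k)} ≤ P_i^{(k)}(ν,t)` where `x_i^{(k)}`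
is the largest such label, zero if there is none). -/
def RClev (n ℓ : ℕ) (lam : ℕ → ℕ) (R : List (ℕ × ℕ)) (ν : ℕ → Multiset ℕ)
    (J : ℕ → ℕ → Multiset ℕ) : Prop :=
  (∀ k, ∀ x ∈ ν k, x ≤ ℓ) ∧
  ∃ t, IsCSTp n lam t ∧ ∀ k i, 1 ≤ k → 1 ≤ i →
    0 ≤ vacT n ℓ lam R ν t k i ∧ ∀ x ∈ J k i, (x : ℤ) ≤ vacT n ℓ lam R ν t k i


/-!
For `i ≥ ℓ` every part of every `ν^{(m)}`, and every width of a rectangle of height `k < n`,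
is at most `i`, so all the `Q_i` in `P_i^{(k)}(ν)` are plain sizes. The configuration
condition then turns the second difference of the sizes into `λ_k − λ_{k+1}`, the rectangle
terms cancelling against `|ξ^{(k)}(R)|`. On the tableau side, every entry is at most
`λ_1 − λ_n ≤ ℓ`, so `ℓ̃ + t_{j,k} ≤ ℓ ≤ i` and each indicator sum just counts a column:
`λ_k − λ_n` and `λ_{k+1} − λ_n`. The three contributions cancel.
-/

lemma Qi_eq_sum_of_forall_le {i : ℕ} {ρ : Multiset ℕ} (h : ∀ x ∈ ρ, x ≤ i) :
    Qi i ρ = ρ.sum := by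
  rw [Qi, Multiset.map_congr rfl fun x hx => min_eq_right (h x hx), Multiset.map_id']

lemma mem_xiR {R : List (ℕ × ℕ)} {k x : ℕ} : x ∈ xiR R k ↔ ∃ r ∈ R, r.2 = k ∧ r.1 = x := by
  simp [xiR]

lemma sum_xiR (R : List (ℕ × ℕ)) (k : ℕ) :
    (xiR R k).sum = (R.map fun r => if r.2 = k then r.1 else 0).sum := by
  simp [xiR, List.sum_map_ite]

lemma ite_add_two_mul_tsub (a b k : ℕ) (hk : 1 ≤ k) :
    (if b = k then a else 0) + 2 * (a * (b - k)) = a * (b - (k - 1)) + a * (b - (k + 1)) := by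
  split_ifs with h
  · subst h
    rw [Nat.sub_self, show b - (b - 1) = 1 by omega, show b - (b + 1) = 0 by omega]
    ring
  · rw [zero_add, mul_left_comm, ← mul_add]
    congr 1
    omega

lemma sum_xiR_add_two_mul (R : List (ℕ × ℕ)) {k : ℕ} (hk : 1 ≤ k) :
    (xiR R k).sum + 2 * (R.map fun r => r.1 * (r.2 - k)).sum =
      (R.map fun r => r.1 * (r.2 - (k - 1))).sum + (R.map fun r => r.1 * (r.2 - (k + 1))).sum := by
  rw [sum_xiR, ← List.sum_map_mul_left, ← List.sum_map_add, ← List.sum_map_add]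
  exact congrArg List.sum (List.map_congr_left fun r _ => ite_add_two_mul_tsub r.1 r.2 k hk)

lemma IsConfig.sum_eq {n : ℕ} {lam : ℕ → ℕ} {R : List (ℕ × ℕ)} {ν : ℕ → Multiset ℕ}
    (hconf : IsConfig n lam R ν)
    (hsz : (∑ j ∈ Finset.Icc 1 n, lam j) = (R.map (fun r => r.1 * r.2)).sum) (m : ℕ) :
    ((ν m).sum : ℤ) =
      (∑ j ∈ Finset.Icc (m + 1) n, (lam j : ℤ)) - ((R.map (fun r => r.1 * (r.2 - m))).sum : ℤ) := by
  rcases Nat.eq_zero_or_pos m with rfl | hm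
  · simp only [hconf.1, Multiset.sum_zero, Nat.cast_zero, zero_add, Nat.sub_zero]
    rw [← Nat.cast_sum, hsz, sub_self]
  · exact hconf.2.2 m hm

lemma sum_Icc_eq_add_sum_Icc {M : Type*} [AddCommMonoid M] (f : ℕ → M) {m n : ℕ} (h : m ≤ n) :
    ∑ j ∈ Finset.Icc m n, f j = f m + ∑ j ∈ Finset.Icc (m + 1) n, f j := by
  rw [← Finset.insert_Icc_add_one_left_eq_Icc h, Finset.sum_insert (by simp)]

lemma vac_eq_of_forall_le {n i k : ℕ} {lam : ℕ → ℕ} {R : List (ℕ × ℕ)} {ν : ℕ → Multiset ℕ}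
    (hconf : IsConfig n lam R ν)
    (hsz : (∑ j ∈ Finset.Icc 1 n, lam j) = (R.map (fun r => r.1 * r.2)).sum)
    (hν : ∀ m, ∀ x ∈ ν m, x ≤ i) (hξ : ∀ x ∈ xiR R k, x ≤ i) (hk : 1 ≤ k) (hkn : k < n) :
    vac R ν k i = lam k - lam (k + 1) := by
  have hsize := hconf.sum_eq hsz
  have hrect : ((xiR R k).sum : ℤ) + 2 * ((R.map fun r => r.1 * (r.2 - k)).sum : ℤ) =
      ((R.map fun r => r.1 * (r.2 - (k - 1))).sum : ℤ) +
        ((R.map fun r => r.1 * (r.2 - (k + 1))).sum : ℤ) := by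
    exact_mod_cast sum_xiR_add_two_mul R hk
  have hlam := sum_Icc_eq_add_sum_Icc (fun j => (lam j : ℤ)) hkn.le
  have hlam' := sum_Icc_eq_add_sum_Icc (fun j => (lam j : ℤ)) (m := k + 1) hkn
  rw [vac, Qi_eq_sum_of_forall_le (hν _), Qi_eq_sum_of_forall_le (hν _),
    Qi_eq_sum_of_forall_le (hν _), Qi_eq_sum_of_forall_le hξ, hsize, hsize, hsize,
    Nat.sub_add_cancel hk]
  linarith

lemma IsCSTp.ltil_add_le {n ℓ : ℕ} {lam : ℕ → ℕ} {t : ℕ → ℕ → ℕ} (ht : IsCSTp n lam t)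
    (hlev : lam 1 ≤ ℓ + lam n) {j m : ℕ} (hj : 1 ≤ j) (hm : 1 ≤ m) (hmn : m ≤ n)
    (hjm : j ≤ lam m - lam n) : ltil n ℓ lam + t j m ≤ ℓ := by
  have hmn' : m ≠ n := by
    rintro rfl
    omega
  have := (ht.1 j m hj hm (by omega) hjm).2
  unfold ltil
  omega

lemma IsCSTp.sum_ite_ltil_add_le {n ℓ i : ℕ} {lam : ℕ → ℕ} {t : ℕ → ℕ → ℕ} (ht : IsCSTp n lam t)
    (hlev : lam 1 ≤ ℓ + lam n) (hi : ℓ ≤ i) {m : ℕ} (hm : 1 ≤ m) (hmn : m ≤ n) :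
    ∑ j ∈ Finset.Icc 1 (lam m - lam n), (if ltil n ℓ lam + t j m ≤ i then (1 : ℤ) else 0) =
      ((lam m - lam n : ℕ) : ℤ) := by
  rw [Finset.sum_congr rfl fun j hj => if_pos ((ht.ltil_add_le hlev (Finset.mem_Icc.1 hj).1 hm
    hmn (Finset.mem_Icc.1 hj).2).trans hi)]
  simp

theorem modified_vacancy_vanishes_general (n ℓ : ℕ)
    (lam : ℕ → ℕ) (hsh : IsShape n lam) (hlev : lam 1 ≤ ℓ + lam n)
    (R : List (ℕ × ℕ))
    (hRlev : ∀ r ∈ R, r.2 < n → r.1 ≤ ℓ)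
    (hsz : (∑ j ∈ Finset.Icc 1 n, lam j) = (R.map (fun r => r.1 * r.2)).sum)
    (ν : ℕ → Multiset ℕ) (hconf : IsConfig n lam R ν)
    (hbound : ∀ k, ∀ x ∈ ν k, x ≤ ℓ)
    (t : ℕ → ℕ → ℕ) (ht : IsCSTp n lam t)
    (k i : ℕ) (hk : 1 ≤ k) (hk2 : k ≤ n - 1) (hi : ℓ ≤ i) :
    vacT n ℓ lam R ν t k i = 0 := by
  have hkn : k < n := by omega
  have hξ : ∀ x ∈ xiR R k, x ≤ i := by
    intro x hx
    obtain ⟨r, hr, hrk, rfl⟩ := mem_xiR.1 hx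
    exact (hRlev r hr (hrk ▸ hkn)).trans hi
  have hlam_succ : lam (k + 1) ≤ lam k := hsh.1 k (k + 1) hk (by omega) hkn
  have hlam_n : lam n ≤ lam (k + 1) := hsh.1 (k + 1) n (by omega) hkn le_rfl
  rw [vacT, vac_eq_of_forall_le hconf hsz (fun m x hx => (hbound m x hx).trans hi) hξ hk hkn,
    ht.sum_ite_ltil_add_le hlev hi hk hkn.le,
    ht.sum_ite_ltil_add_le hlev hi (m := k + 1) (by omega) hkn]
  omega

/-- Let `λ` be a partition with at most `n` parts with
`λ_1 − λ_n ≤ ℓ` and `R` a sequence of rectangles each restricted of level `ℓ`.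
Then for every `ν ∈ C^ℓ(λ;R)`, every `t ∈ CST(λ')`, every `1 ≤ k < n` and every
`i ≥ ℓ`, the modified vacancy number vanishes: `P_i^{(k)}(ν,t) = 0`. -/
theorem modified_vacancy_vanishes (n ℓ : ℕ) (hn : 2 ≤ n) (hl : 1 ≤ ℓ)
    (lam : ℕ → ℕ) (hsh : IsShape n lam) (hlev : lam 1 ≤ ℓ + lam n)
    (R : List (ℕ × ℕ)) (hR : ∀ r ∈ R, 1 ≤ r.1 ∧ 1 ≤ r.2 ∧ r.2 ≤ n)
    (hRlev : ∀ r ∈ R, r.2 < n → r.1 ≤ ℓ)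
    (hsz : (∑ j ∈ Finset.Icc 1 n, lam j) = (R.map (fun r => r.1 * r.2)).sum)
    (ν : ℕ → Multiset ℕ) (hconf : IsConfig n lam R ν) (hadm : Admissible R ν)
    (hbound : ∀ k, ∀ x ∈ ν k, x ≤ ℓ)
    (t : ℕ → ℕ → ℕ) (ht : IsCSTp n lam t)
    (k i : ℕ) (hk : 1 ≤ k) (hk2 : k ≤ n - 1) (hi : ℓ ≤ i) :
    vacT n ℓ lam R ν t k i = 0 :=
  modified_vacancy_vanishes_general n ℓ lam hsh hlev R hRlev hsz ν hconf hbound t ht k i hk hk2 hi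

end RiggedConf
end
end

section
/- Let w be a word in the alphabet {1,2} and let ŵ be a word obtained from w by deleting one letter i ∈ {1,2}. Then: (1) ε_1(ŵ) ≤ ε_1(w) + 1, and if ε_1(ŵ) = ε_1(w) + 1 then i = 1; (2) ε_1(w) ≤ ε_1(ŵ) + 1, and if ε_1(w) = ε_1(ŵ) + 1 then i = 2. -/
namespace CrystalWords

/-- One step of the parenthesis-matching scan for the letters `i` (closing
parenthesis) and `i+1` (opening parenthesis).  The state `(p, q)` records the
number of unmatched closing resp. opening parentheses seen so far. -/
def bstep (i : ℕ) (pq : ℕ × ℕ) (a : ℕ) : ℕ × ℕ :=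
  if a = i then (if 0 < pq.2 then (pq.1, pq.2 - 1) else (pq.1 + 1, pq.2))
  else if a = i + 1 then (pq.1, pq.2 + 1)
  else pq

/-- `φ_i` of a word: the number `p` of unmatched letters `i` after cancellation. -/
def phiWord (i : ℕ) (w : List ℕ) : ℕ := (w.foldl (bstep i) (0, 0)).1

/-- `ε_i` of a word: the number `q` of unmatched letters `i+1` after cancellation. -/
def epsWord (i : ℕ) (w : List ℕ) : ℕ := (w.foldl (bstep i) (0, 0)).2

/-- The raising operator `e_i` on words: it changes the leftmost unmatched
letter `i+1` into an `i`, and is undefined when `ε_i = 0`. -/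
def eWord (i : ℕ) : List ℕ → Option (List ℕ)
  | [] => none
  | a :: w =>
      if a = i + 1 ∧ phiWord i w = 0 then some (i :: w)
      else (eWord i w).map (a :: ·)

/-- The lowering operator `f_i` on words: it changes the rightmost unmatched
letter `i` into an `i+1`, and is undefined when `φ_i = 0`. -/
def fWord (i : ℕ) : List ℕ → Option (List ℕ)
  | [] => none
  | a :: w =>
      if (if a = i + 1 then 1 else 0) < phiWord i w then (fWord i w).map (a :: ·)
      else if a = i then some ((i + 1) :: w) else none

/-- A word is an `A_{n-1}` highest weight vector when all `ε_j` vanish. -/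
def IsHW (n : ℕ) (w : List ℕ) : Prop := ∀ j, 1 ≤ j → j ≤ n - 1 → epsWord j w = 0


/-!
Only the second component of the `bstep 1` state enters `ε_1`, and it evolves on its own: a
counter that goes up on a letter `2` and down, truncated at `0`, on a letter `1`. One step of
this counter is monotone and never widens a gap of one between two inputs. Hence deleting a
letter `2` lowers the counter at that position by one, deleting a letter `1` raises it by at
most one, and the rest of the word carries the two counters along without separating them
further or changing their order.
-/

def epsStep (q a : ℕ) : ℕ := if a = 2 then q + 1 else if a = 1 then q - 1 else q

lemma bstep_one_snd (s : ℕ × ℕ) (a : ℕ) : (bstep 1 s a).2 = epsStep s.2 a := by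
  unfold bstep epsStep
  split_ifs <;> simp_all

lemma foldl_bstep_one_snd (v : List ℕ) (s : ℕ × ℕ) :
    (v.foldl (bstep 1) s).2 = v.foldl epsStep s.2 := by
  induction v generalizing s with
  | nil => rfl
  | cons a v ih => simp only [List.foldl_cons, ih, bstep_one_snd]

lemma epsWord_one_eq_foldl (w : List ℕ) : epsWord 1 w = w.foldl epsStep 0 :=
  foldl_bstep_one_snd w (0, 0)

lemma epsStep_mono_left (a : ℕ) : Monotone (epsStep · a) := by
  intro q q' h
  simp only [epsStep]
  split_ifs <;> omega

lemma epsStep_succ_le (q a : ℕ) : epsStep (q + 1) a ≤ epsStep q a + 1 := by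
  unfold epsStep
  split_ifs <;> omega

lemma foldl_epsStep_mono (v : List ℕ) : Monotone (v.foldl epsStep) := by
  induction v with
  | nil => exact monotone_id
  | cons a v ih => exact ih.comp (epsStep_mono_left a)

lemma foldl_epsStep_succ_le (v : List ℕ) (q : ℕ) :
    v.foldl epsStep (q + 1) ≤ v.foldl epsStep q + 1 := by
  induction v generalizing q with
  | nil => rfl
  | cons a v ih =>
    calc v.foldl epsStep (epsStep (q + 1) a)
        ≤ v.foldl epsStep (epsStep q a + 1) := foldl_epsStep_mono v (epsStep_succ_le q a)
      _ ≤ v.foldl epsStep (epsStep q a) + 1 := ih _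

lemma epsWord_one_append_cons (u v : List ℕ) (a : ℕ) :
    epsWord 1 (u ++ a :: v) = v.foldl epsStep (epsStep (u.foldl epsStep 0) a) := by
  rw [epsWord_one_eq_foldl, List.foldl_append, List.foldl_cons]

lemma epsWord_one_append (u v : List ℕ) :
    epsWord 1 (u ++ v) = v.foldl epsStep (u.foldl epsStep 0) := by
  rw [epsWord_one_eq_foldl, List.foldl_append]

lemma epsWord_one_insert_two (u v : List ℕ) :
    epsWord 1 (u ++ v) ≤ epsWord 1 (u ++ 2 :: v) ∧
      epsWord 1 (u ++ 2 :: v) ≤ epsWord 1 (u ++ v) + 1 := by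
  rw [epsWord_one_append_cons, epsWord_one_append]
  exact ⟨foldl_epsStep_mono v (by simp [epsStep]), foldl_epsStep_succ_le v _⟩

lemma epsWord_one_insert_one (u v : List ℕ) :
    epsWord 1 (u ++ 1 :: v) ≤ epsWord 1 (u ++ v) ∧
      epsWord 1 (u ++ v) ≤ epsWord 1 (u ++ 1 :: v) + 1 := by
  rw [epsWord_one_append_cons, epsWord_one_append]
  set q := u.foldl epsStep 0
  have hstep : epsStep q 1 = q - 1 := by simp [epsStep]
  rw [hstep]
  refine ⟨foldl_epsStep_mono v (Nat.sub_le q 1), ?_⟩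
  calc v.foldl epsStep q
      ≤ v.foldl epsStep (q - 1 + 1) := foldl_epsStep_mono v (by omega)
    _ ≤ v.foldl epsStep (q - 1) + 1 := foldl_epsStep_succ_le v _

lemma epsWord_one_insert_of_ne (u v : List ℕ) {a : ℕ} (h1 : a ≠ 1) (h2 : a ≠ 2) :
    epsWord 1 (u ++ a :: v) = epsWord 1 (u ++ v) := by
  rw [epsWord_one_append_cons, epsWord_one_append]
  simp [epsStep, h1, h2]

theorem delete_letter_eps_general (w what : List ℕ) (i : ℕ)
    (hdel : ∃ u v, w = u ++ i :: v ∧ what = u ++ v) :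
    (epsWord 1 what ≤ epsWord 1 w + 1 ∧ (epsWord 1 what = epsWord 1 w + 1 → i = 1)) ∧
    (epsWord 1 w ≤ epsWord 1 what + 1 ∧ (epsWord 1 w = epsWord 1 what + 1 → i = 2)) := by
  obtain ⟨u, v, rfl, rfl⟩ := hdel
  by_cases h1 : i = 1
  · subst h1
    have := epsWord_one_insert_one u v
    omega
  by_cases h2 : i = 2
  · subst h2
    have := epsWord_one_insert_two u v
    omega
  have := epsWord_one_insert_of_ne u v h1 h2
  omega

/-- Let `w` be a word in the alphabet `{1,2}` and let `ŵ` be a word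
obtained from `w` by deleting one letter `i ∈ {1,2}`.  Then:
(1) `ε_1(ŵ) ≤ ε_1(w) + 1`, and if equality holds then `i = 1`;
(2) `ε_1(w) ≤ ε_1(ŵ) + 1`, and if equality holds then `i = 2`. -/
theorem delete_letter_eps (w what : List ℕ) (i : ℕ)
    (hw : ∀ a ∈ w, a = 1 ∨ a = 2) (hi : i = 1 ∨ i = 2)
    (hdel : ∃ u v, w = u ++ i :: v ∧ what = u ++ v) :
    (epsWord 1 what ≤ epsWord 1 w + 1 ∧ (epsWord 1 what = epsWord 1 w + 1 → i = 1)) ∧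
    (epsWord 1 w ≤ epsWord 1 what + 1 ∧ (epsWord 1 w = epsWord 1 what + 1 → i = 2)) :=
  delete_letter_eps_general w what i hdel

end CrystalWords
end

section
/- Let 1 ≤ i ≤ n−1 and let w be a word in {1,…,n} that is an almost highest weight vector with defect i, meaning ε_j(w) = δ_{ij} for all 1 ≤ j ≤ n−1 and, in case i > 1, also ε_{i−1}(e_i(w)) = 0. Then e_i(w) is either an A_{n−1} highest weight vector or an almost highest weight vector with defect i+1 (the latter only possible when i+1 ≤ n−1). -/
/-! Write `w = u (i+1) v` and `e_i w = u i v`, where `u` has no unmatched `i+1` and `v` no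
unmatched `i`. Changing that one letter leaves `ε_j` unchanged for `|j - i| ≥ 2`, lowers `ε_i`
by one, and raises `ε_{i+1}` by at most one; `ε_{i-1}` is controlled by the defect condition. If
`ε_{i+1}` does rise, the letter `i+2` flipped by `e_{i+1}` must lie in `u`, because `v` has no
unmatched `i+2`; the letter `i+1` it creates is then cancelled by the `i` created by `e_i`, so
`ε_i (e_{i+1} e_i w) = 0`. -/

namespace CrystalWords

/-- A word `w` over `{1,…,n}` is an almost highest weight vector with defect `i`
(`1 ≤ i ≤ n-1`): `ε_j(w) = δ_{ij}` for all `1 ≤ j ≤ n-1`, and in case `i > 1`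
moreover `ε_{i-1}(e_i(w)) = 0`. -/
def IsAlmostHW (n i : ℕ) (w : List ℕ) : Prop :=
  1 ≤ i ∧ i ≤ n - 1 ∧
  (∀ j, 1 ≤ j → j ≤ n - 1 → epsWord j w = if j = i then 1 else 0) ∧
  (1 < i → ∀ w', eWord i w = some w' → epsWord (i - 1) w' = 0)

lemma bstep_zero (j a : ℕ) :
    bstep j (0, 0) a = (if a = j then 1 else 0, if a = j + 1 then 1 else 0) := by
  unfold bstep
  split_ifs <;> simp_all

lemma foldl_bstep (j : ℕ) (w : List ℕ) (p q : ℕ) :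
    w.foldl (bstep j) (p, q) =
      (p + (phiWord j w - q), epsWord j w + (q - phiWord j w)) := by
  induction w generalizing p q with
  | nil => simp [phiWord, epsWord]
  | cons a w ih =>
    rw [phiWord, epsWord, List.foldl_cons, List.foldl_cons, bstep_zero, ih, ih]
    unfold bstep
    split_ifs <;> simp only [Prod.mk.injEq] <;> omega

lemma phiWord_append (j : ℕ) (u v : List ℕ) :
    phiWord j (u ++ v) = phiWord j u + (phiWord j v - epsWord j u) := by
  rw [phiWord, List.foldl_append, foldl_bstep]
  rfl

lemma epsWord_append (j : ℕ) (u v : List ℕ) :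
    epsWord j (u ++ v) = epsWord j v + (epsWord j u - phiWord j v) := by
  rw [epsWord, List.foldl_append, foldl_bstep]
  rfl

lemma phiWord_cons (j a : ℕ) (v : List ℕ) :
    phiWord j (a :: v) =
      (if a = j then 1 else 0) + (phiWord j v - if a = j + 1 then 1 else 0) := by
  rw [phiWord, List.foldl_cons, bstep_zero, foldl_bstep]

lemma epsWord_cons (j a : ℕ) (v : List ℕ) :
    epsWord j (a :: v) = epsWord j v + ((if a = j + 1 then 1 else 0) - phiWord j v) := by
  rw [epsWord, List.foldl_cons, bstep_zero, foldl_bstep]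

lemma eWord_eq_some {i : ℕ} {w w' : List ℕ} (h : eWord i w = some w') :
    ∃ u v, w = u ++ (i + 1) :: v ∧ w' = u ++ i :: v ∧
      epsWord i u = 0 ∧ phiWord i v = 0 := by
  induction w generalizing w' with
  | nil => simp [eWord] at h
  | cons a w ih =>
    rw [eWord] at h
    split_ifs at h with hflip
    · obtain ⟨rfl, hw⟩ := hflip
      exact ⟨[], w, rfl, (Option.some_injective _ h).symm, rfl, hw⟩
    · obtain ⟨w₀, hw₀, rfl⟩ := Option.map_eq_some_iff.mp h
      obtain ⟨u, v, rfl, rfl, hu, hv⟩ := ih hw₀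
      refine ⟨a :: u, v, rfl, rfl, ?_, hv⟩
      simp only [epsWord_cons, phiWord_append, phiWord_cons] at hflip ⊢
      split_ifs at hflip ⊢ <;> omega

lemma epsWord_eWord {i : ℕ} {w w' : List ℕ} (h : eWord i w = some w') :
    epsWord i w' + 1 = epsWord i w := by
  obtain ⟨u, v, rfl, rfl, hu, hv⟩ := eWord_eq_some h
  simp only [epsWord_append, epsWord_cons, phiWord_cons]
  split_ifs <;> omega

lemma epsWord_eWord_of_ne {i j : ℕ} {w w' : List ℕ} (h : eWord i w = some w')
    (hji : j ≠ i) (hji' : j + 1 ≠ i) (hij : j ≠ i + 1) : epsWord j w' = epsWord j w := by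
  obtain ⟨u, v, rfl, rfl, -, -⟩ := eWord_eq_some h
  simp only [epsWord_append, epsWord_cons, phiWord_cons]
  split_ifs <;> omega

lemma epsWord_succ_eWord_le {i : ℕ} {w w' : List ℕ} (h : eWord i w = some w') :
    epsWord (i + 1) w' ≤ epsWord (i + 1) w + 1 := by
  obtain ⟨u, v, rfl, rfl, -, -⟩ := eWord_eq_some h
  simp only [epsWord_append, epsWord_cons, phiWord_cons]
  split_ifs <;> omega

lemma epsWord_append_cons_pos {j : ℕ} (u v : List ℕ) (hv : phiWord j v = 0) :
    0 < epsWord j (u ++ (j + 1) :: v) := by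
  simp only [epsWord_append, epsWord_cons, phiWord_cons]
  split_ifs <;> omega

lemma epsWord_eWord_succ_eWord {i : ℕ} {w w' w'' : List ℕ} (h : eWord i w = some w')
    (h' : eWord (i + 1) w' = some w'') (hεi : epsWord i w = 1) (hεs : epsWord (i + 1) w = 0) :
    epsWord i w'' = 0 := by
  obtain ⟨u, v, rfl, rfl, hu, hv⟩ := eWord_eq_some h
  obtain ⟨u', v', hsplit, rfl, -, hv'⟩ := eWord_eq_some h'
  have hεv : epsWord i v = 0 := by
    simp only [epsWord_append, epsWord_cons, phiWord_cons, if_pos] at hεi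
    omega
  have hεsv : epsWord (i + 1) v = 0 := by
    simp only [epsWord_append, epsWord_cons, phiWord_cons] at hεs
    split_ifs at hεs <;> omega
  rcases List.append_eq_append_iff.mp hsplit with
    ⟨_ | ⟨b, m⟩, -, hm⟩ | ⟨_ | ⟨b, m⟩, rfl, hm⟩
  all_goals simp only [List.nil_append, List.cons_append, List.cons.injEq] at hm
  · omega
  · obtain ⟨-, rfl⟩ := hm
    have := epsWord_append_cons_pos m v' hv'
    omega
  · omega
  · obtain ⟨rfl, rfl⟩ := hm
    simp only [epsWord_append, epsWord_cons, phiWord_append, phiWord_cons] at hu ⊢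
    split_ifs at hu ⊢ <;> omega

theorem almost_highest_weight_general (n i : ℕ) (w : List ℕ) (h : IsAlmostHW n i w) :
    ∀ w', eWord i w = some w' → IsHW n w' ∨ IsAlmostHW n (i + 1) w' := by
  intro w' hw'
  obtain ⟨hi, hin, hε, hprev⟩ := h
  have hεi : epsWord i w = 1 := by simpa using hε i hi hin
  have hεw' : ∀ j, 1 ≤ j → j ≤ n - 1 → j ≠ i + 1 → epsWord j w' = 0 := by
    intro j hj hjn hji
    by_cases hj_eq : j = i
    · have := epsWord_eWord hw'
      subst hj_eq
      omega
    by_cases hj_pred : j + 1 = i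
    · simpa [← hj_pred] using hprev (by omega) w' hw'
    rw [epsWord_eWord_of_ne hw' hj_eq hj_pred hji, hε j hj hjn, if_neg hj_eq]
  by_cases hnext : i + 1 ≤ n - 1 ∧ epsWord (i + 1) w' ≠ 0
  · have hεs : epsWord (i + 1) w = 0 := by simpa using hε (i + 1) (by omega) hnext.1
    have hεs' : epsWord (i + 1) w' = 1 := by
      have := epsWord_succ_eWord_le hw'
      omega
    refine .inr ⟨by omega, hnext.1, fun j hj hjn => ?_, fun _ w'' hw'' => ?_⟩
    · split_ifs with hji
      · rwa [hji]
      · exact hεw' j hj hjn hji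
    · simpa using epsWord_eWord_succ_eWord hw' hw'' hεi hεs
  · refine .inl fun j hj hjn => ?_
    by_cases hji : j = i + 1
    · subst hji
      omega
    · exact hεw' j hj hjn hji

/-- Let `w` be an almost highest weight vector with defect `i`.
Then `e_i(w)` is either an `A_{n-1}` highest weight vector or an almost highest
weight vector with defect `i+1` (the latter being possible only when
`i + 1 ≤ n - 1`, which is part of `IsAlmostHW`). -/
theorem almost_highest_weight (n i : ℕ) (hn : 2 ≤ n) (w : List ℕ)
    (hw : ∀ a ∈ w, 1 ≤ a ∧ a ≤ n) (h : IsAlmostHW n i w) :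
    ∀ w', eWord i w = some w' → IsHW n w' ∨ IsAlmostHW n (i + 1) w' :=
  almost_highest_weight_general n i w h

end CrystalWords
end

section
/- Let w be a word in {1,…,n} that is an A_{n−1} highest weight vector, and let ŵ be obtained from w by deleting one occurrence of a letter i. Then there exists an index r with i ≤ r ≤ n such that the word e_{r−1}e_{r−2}⋯e_i(ŵ) (interpreted as ŵ itself when r = i) is defined and is an A_{n−1} highest weight vector. -/
namespace CrystalWords

/-- `eUp i r w` applies the raising operators `e_i, e_{i+1}, …, e_{r-1}` (in this
order, `e_i` first) to the word `w`; for `r ≤ i` it is `w` itself.  It is `none`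
if some raising operator along the way is undefined. -/
def eUp : ℕ → ℕ → List ℕ → Option (List ℕ)
  | i, r, w => if _h : i < r then (eWord i w).bind (fun w' => eUp (i + 1) r w') else some w
  termination_by i r _ => r - i


lemma bstep_i_pos {i p q : ℕ} (hq : 0 < q) : bstep i (p, q) i = (p, q - 1) := by
  simp [bstep, hq]
lemma bstep_i_zero {i p : ℕ} : bstep i (p, 0) i = (p + 1, 0) := by simp [bstep]
lemma bstep_succ {i p q : ℕ} : bstep i (p, q) (i + 1) = (p, q + 1) := by
  simp [bstep]
lemma bstep_other {i p q a : ℕ} (h1 : a ≠ i) (h2 : a ≠ i + 1) :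
    bstep i (p, q) a = (p, q) := by simp [bstep, h1, h2]

lemma fold_padd (i : ℕ) (s : List ℕ) : ∀ p q : ℕ,
    s.foldl (bstep i) (p, q) =
      ((s.foldl (bstep i) (0, q)).1 + p, (s.foldl (bstep i) (0, q)).2) := by
  induction s with
  | nil => intro p q; simp
  | cons a s ih =>
    intro p q
    simp only [List.foldl_cons]
    by_cases h1 : a = i
    · subst h1
      rcases Nat.eq_zero_or_pos q with hq | hq
      · subst hq
        rw [bstep_i_zero, bstep_i_zero, ih (p + 1) 0, ih 1 0]
        refine Prod.ext ?_ rfl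
        simp only []
        omega
      · rw [bstep_i_pos hq, bstep_i_pos hq]
        exact ih p (q - 1)
    · by_cases h2 : a = i + 1
      · subst h2
        rw [bstep_succ, bstep_succ]
        exact ih p (q + 1)
      · rw [bstep_other h1 h2, bstep_other h1 h2]
        exact ih p q

lemma fold_qsucc (i : ℕ) (s : List ℕ) : ∀ q : ℕ,
    s.foldl (bstep i) (0, q + 1) =
      (if (s.foldl (bstep i) (0, q)).1 = 0
       then (0, (s.foldl (bstep i) (0, q)).2 + 1)
       else ((s.foldl (bstep i) (0, q)).1 - 1, (s.foldl (bstep i) (0, q)).2)) := by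
  induction s with
  | nil => intro q; simp
  | cons a s ih =>
    intro q
    rw [List.foldl_cons, List.foldl_cons]
    by_cases h1 : a = i
    · subst h1
      rw [bstep_i_pos (Nat.succ_pos q)]
      simp only [Nat.succ_sub_one, Nat.add_sub_cancel]
      cases q with
      | zero =>
        rw [bstep_i_zero, fold_padd _ s 1 0]
        have : (s.foldl (bstep a) (0, 0)).1 + 1 ≠ 0 := by omega
        rw [if_neg this]
        refine Prod.ext ?_ rfl
        simp only []
        omega
      | succ q' =>
        rw [bstep_i_pos (Nat.succ_pos q')]
        exact ih q'
    · by_cases h2 : a = i + 1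
      · subst h2
        rw [bstep_succ, bstep_succ]
        exact ih (q + 1)
      · rw [bstep_other h1 h2, bstep_other h1 h2]
        exact ih q

lemma cons_i (i : ℕ) (s : List ℕ) :
    phiWord i (i :: s) = phiWord i s + 1 ∧ epsWord i (i :: s) = epsWord i s := by
  unfold phiWord epsWord
  rw [List.foldl_cons, bstep_i_zero, fold_padd i s 1 0]
  exact ⟨rfl, rfl⟩

lemma cons_succ_zero {i : ℕ} {s : List ℕ} (h : phiWord i s = 0) :
    phiWord i ((i + 1) :: s) = 0 ∧ epsWord i ((i + 1) :: s) = epsWord i s + 1 := by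
  unfold phiWord epsWord at *
  rw [List.foldl_cons, bstep_succ, fold_qsucc i s 0, if_pos h]
  exact ⟨rfl, rfl⟩

lemma cons_succ_pos {i : ℕ} {s : List ℕ} (h : phiWord i s ≠ 0) :
    phiWord i ((i + 1) :: s) = phiWord i s - 1 ∧ epsWord i ((i + 1) :: s) = epsWord i s := by
  unfold phiWord epsWord at *
  rw [List.foldl_cons, bstep_succ, fold_qsucc i s 0, if_neg h]
  exact ⟨rfl, rfl⟩

lemma cons_other {i a : ℕ} {s : List ℕ} (h1 : a ≠ i) (h2 : a ≠ i + 1) :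
    phiWord i (a :: s) = phiWord i s ∧ epsWord i (a :: s) = epsWord i s := by
  unfold phiWord epsWord
  rw [List.foldl_cons, bstep_other h1 h2]
  exact ⟨rfl, rfl⟩

lemma countBal (i : ℕ) (s : List ℕ) :
    List.count (i + 1) s + phiWord i s = List.count i s + epsWord i s := by
  induction s with
  | nil => simp [phiWord, epsWord]
  | cons a s ih =>
    by_cases h1 : a = i
    · subst h1
      obtain ⟨hp, he⟩ := cons_i a s
      have c1 : List.count (a + 1) (a :: s) = List.count (a + 1) s := by
        simp [List.count_cons]
      have c2 : List.count a (a :: s) = List.count a s + 1 := by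
        simp [List.count_cons]
      omega
    · by_cases h2 : a = i + 1
      · subst h2
        have c1 : List.count (i + 1) ((i + 1) :: s) = List.count (i + 1) s + 1 := by
          simp [List.count_cons]
        have c2 : List.count i ((i + 1) :: s) = List.count i s := by
          simp [List.count_cons]
        by_cases h3 : phiWord i s = 0
        · obtain ⟨hp, he⟩ := cons_succ_zero h3
          omega
        · obtain ⟨hp, he⟩ := cons_succ_pos h3
          omega
      · have c1 : List.count (i + 1) (a :: s) = List.count (i + 1) s := by
          simp [List.count_cons, h2]
        have c2 : List.count i (a :: s) = List.count i s := by
          simp [List.count_cons, h1]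
        obtain ⟨hp, he⟩ := cons_other (s := s) h1 h2
        omega

lemma eps_cons_ge {i a : ℕ} {s : List ℕ} : epsWord i s ≤ epsWord i (a :: s) := by
  by_cases h1 : a = i
  · subst h1; exact (cons_i a s).2.ge
  · by_cases h2 : a = i + 1
    · subst h2
      by_cases h3 : phiWord i s = 0
      · have := (cons_succ_zero h3).2; omega
      · exact (cons_succ_pos h3).2.ge
    · exact (cons_other h1 h2).2.ge

lemma eps_le_iff {i m : ℕ} {s : List ℕ} :
    epsWord i s ≤ m ↔ ∀ t, t <:+ s → List.count (i + 1) t ≤ List.count i t + m := by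
  induction s with
  | nil =>
    constructor
    · intro _ t ht
      rw [List.suffix_nil] at ht
      simp [ht]
    · intro _
      simp [epsWord]
  | cons a s ih =>
    constructor
    · intro h t ht
      rw [List.suffix_cons_iff] at ht
      rcases ht with rfl | ht
      · have hb := countBal i (a :: s)
        omega
      · exact ih.1 (le_trans eps_cons_ge h) t ht
    · intro h
      have hs : epsWord i s ≤ m :=
        ih.2 (fun t ht => h t (ht.trans (List.suffix_cons a s)))
      by_cases h1 : a = i
      · subst h1; have := (cons_i a s).2; omega
      · by_cases h2 : a = i + 1
        · subst h2
          by_cases h3 : phiWord i s = 0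
          · have he := (cons_succ_zero h3).2
            have hfull := h ((i + 1) :: s) (List.suffix_refl _)
            have hb := countBal i s
            have c1 : List.count (i + 1) ((i + 1) :: s) = List.count (i + 1) s + 1 := by
              simp [List.count_cons]
            have c2 : List.count i ((i + 1) :: s) = List.count i s := by
              simp [List.count_cons]
            omega
          · have := (cons_succ_pos h3).2; omega
        · have := (cons_other (s := s) h1 h2).2; omega


lemma eWord_spec {i : ℕ} : ∀ {x : List ℕ}, epsWord i x ≠ 0 →
    ∃ a b, x = a ++ (i + 1) :: b ∧ phiWord i b = 0 ∧
      eWord i x = some (a ++ i :: b) := by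
  intro x
  induction x with
  | nil => intro h; exact absurd (by simp [epsWord]) h
  | cons c x ih =>
    intro h
    by_cases hc : c = i + 1 ∧ phiWord i x = 0
    · obtain ⟨rfl, hp⟩ := hc
      exact ⟨[], x, by simp, hp, by simp [eWord, hp]⟩
    · have hx : epsWord i x ≠ 0 := by
        by_cases h1 : c = i
        · subst h1; have := (cons_i c x).2; omega
        · by_cases h2 : c = i + 1
          · subst h2
            have h3 : phiWord i x ≠ 0 := fun hz => hc ⟨rfl, hz⟩
            have := (cons_succ_pos h3).2; omega
          · have := (cons_other (s := x) h1 h2).2; omega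
      obtain ⟨a, b, rfl, hp, he⟩ := ih hx
      refine ⟨c :: a, b, rfl, hp, ?_⟩
      simp only [eWord, List.cons_append, if_neg hc, he, Option.map_some]

lemma suffix_short {t a m : List ℕ} (h : t <:+ a ++ m) (hl : t.length ≤ m.length) :
    t <:+ m := by
  induction a with
  | nil => simpa using h
  | cons e a ih =>
    rw [List.cons_append, List.suffix_cons_iff] at h
    rcases h with h | h
    · exfalso
      have := congrArg List.length h
      simp [List.length_append] at this
      omega
    · exact ih h

lemma suffix_split {t a m : List ℕ} (h : t <:+ a ++ m) (hl : m.length ≤ t.length) :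
    ∃ t', t' <:+ a ∧ t = t' ++ m := by
  induction a with
  | nil =>
    simp only [List.nil_append] at h
    have h2 := h.length_le
    have ht : t = m := h.eq_of_length (le_antisymm h2 hl)
    exact ⟨[], List.nil_suffix, by simp [ht]⟩
  | cons e a ih =>
    rw [List.cons_append, List.suffix_cons_iff] at h
    rcases h with h | h
    · exact ⟨e :: a, List.suffix_refl _, by simpa using h⟩
    · obtain ⟨t', ht', rfl⟩ := ih h
      exact ⟨t', ht'.trans (List.suffix_cons e a), rfl⟩

lemma suffix_append_both {t a : List ℕ} (m : List ℕ) (h : t <:+ a) :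
    t ++ m <:+ a ++ m := by
  obtain ⟨r, rfl⟩ := h
  exact ⟨r, by simp⟩

lemma count_mid (y z : ℕ) (t' b : List ℕ) :
    List.count y (t' ++ z :: b) =
      List.count y t' + List.count y b + (if z = y then 1 else 0) := by
  rw [List.count_append, List.count_cons]
  by_cases h : z = y
  · simp [h, Nat.add_assoc]
  · simp [h]

lemma count_mid' {y z : ℕ} (t' b : List ℕ) (h : z ≠ y) :
    List.count y (t' ++ z :: b) = List.count y t' + List.count y b := by
  rw [count_mid, if_neg h]
  omega

lemma count_mid_eq (y : ℕ) (t' b : List ℕ) :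
    List.count y (t' ++ y :: b) = List.count y t' + List.count y b + 1 := by
  rw [count_mid, if_pos rfl]


lemma eUp_stop {i r : ℕ} (h : ¬ i < r) (x : List ℕ) : eUp i r x = some x := by
  rw [eUp]; simp [h]

lemma eUp_go {i r : ℕ} (h : i < r) (x : List ℕ) :
    eUp i r x = (eWord i x).bind (fun w' => eUp (i + 1) r w') := by
  rw [eUp]; simp [h]

lemma eps_top {n i : ℕ} {x : List ℕ} (hx : ∀ a ∈ x, 1 ≤ a ∧ a ≤ n) (hi : n ≤ i) :
    epsWord i x = 0 := by
  have h := (eps_le_iff (i := i) (m := 0) (s := x)).2 ?_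
  · omega
  · intro t ht
    have hc : List.count (i + 1) t = 0 := by
      rw [List.count_eq_zero]
      intro hm
      have := (hx _ (ht.subset hm)).2
      omega
    omega

lemma main (n : ℕ) : ∀ (k i : ℕ) (x : List ℕ) (c : ℕ), n ≤ i + k → 1 ≤ i → i ≤ n →
    (∀ a ∈ x, 1 ≤ a ∧ a ≤ n) →
    (∀ j, 1 ≤ j → j ≤ n - 1 → j ≠ i → epsWord j x = 0) →
    (∀ t, t <:+ x → List.count (i + 1) t ≤ List.count i t + (if c < t.length then 1 else 0)) →
    (2 ≤ i → ∀ t, t <:+ x → c < t.length → List.count i t + 1 ≤ List.count (i - 1) t) →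
    ∃ r, i ≤ r ∧ r ≤ n ∧ ∃ z, eUp i r x = some z ∧ IsHW n z := by
  intro k
  induction k with
  | zero =>
    intro i x c hk hi1 hi2 hx hA hB hC
    have he : epsWord i x = 0 := eps_top hx (by omega)
    refine ⟨i, le_refl _, hi2, x, eUp_stop (lt_irrefl i) x, ?_⟩
    intro j hj1 hj2
    by_cases hji : j = i
    · subst hji; exact he
    · exact hA j hj1 hj2 hji
  | succ k ih =>
    intro i x c hk hi1 hi2 hx hA hB hC
    by_cases he : epsWord i x = 0
    · refine ⟨i, le_refl _, hi2, x, eUp_stop (lt_irrefl i) x, ?_⟩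
      intro j hj1 hj2
      by_cases hji : j = i
      · subst hji; exact he
      · exact hA j hj1 hj2 hji
    · have hin : i < n := by
        rcases Nat.lt_or_ge i n with h | h
        · exact h
        · exact absurd (eps_top hx h) he
      obtain ⟨a, b, rfl, hpb, hew⟩ := eWord_spec he
      have hbsuf : (i + 1) :: b <:+ a ++ (i + 1) :: b := List.suffix_append a _
      have hbal := countBal i b
      have cA : List.count (i + 1) ((i + 1) :: b) = List.count (i + 1) b + 1 := by
        simp [List.count_cons]
      have cB : List.count i ((i + 1) :: b) = List.count i b := by
        simp [List.count_cons]
      have hcb : c ≤ b.length := by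
        by_contra hcb
        push_neg at hcb
        have h1 := hB ((i + 1) :: b) hbsuf
        rw [if_neg (by simp only [List.length_cons]; omega)] at h1
        omega
      have hex1 : epsWord i (a ++ (i + 1) :: b) ≤ 1 := by
        refine eps_le_iff.2 (fun t ht => ?_)
        have h1 := hB t ht
        by_cases h : c < t.length
        · rw [if_pos h] at h1; omega
        · rw [if_neg h] at h1; omega
      have hepsb : epsWord i b = 0 := by
        have h1 := eps_le_iff.1 hex1 ((i + 1) :: b) hbsuf
        omega
      have hz_mem : ∀ a' ∈ a ++ i :: b, 1 ≤ a' ∧ a' ≤ n := by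
        intro a' ha'
        rcases List.mem_append.1 ha' with h | h
        · exact hx a' (List.mem_append.2 (Or.inl h))
        · rcases List.mem_cons.1 h with rfl | h
          · exact ⟨hi1, le_of_lt hin⟩
          · exact hx a' (List.mem_append.2 (Or.inr (List.mem_cons_of_mem _ h)))
      have hsplitz : ∀ t : List ℕ, t <:+ a ++ i :: b → b.length < t.length →
          ∃ t', t' <:+ a ∧ t = t' ++ i :: b := by
        intro t ht hlen
        exact suffix_split (m := i :: b) ht (by simp only [List.length_cons]; omega)
      have hshortz : ∀ t : List ℕ, t <:+ a ++ i :: b → t.length ≤ b.length → t <:+ b := by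
        intro t ht hlen
        rw [List.append_cons] at ht
        exact suffix_short ht hlen
      have hbx : b <:+ a ++ (i + 1) :: b := (List.suffix_cons (i + 1) b).trans hbsuf
      have hxt : ∀ t' : List ℕ, t' <:+ a → t' ++ (i + 1) :: b <:+ a ++ (i + 1) :: b :=
        fun t' h => suffix_append_both _ h
      have hlenx : ∀ t' : List ℕ, c < (t' ++ (i + 1) :: b).length := by
        intro t'
        simp only [List.length_append, List.length_cons]
        omega
      have key : ∀ u, u <:+ a ++ (i + 1) :: b →
          List.count (i + 1 + 1) u ≤ List.count (i + 1) u := by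
        intro u hu
        by_cases hn1 : i + 1 ≤ n - 1
        · have := eps_le_iff.1 (le_of_eq (hA (i + 1) (by omega) hn1 (by omega))) u hu
          omega
        · have : List.count (i + 1 + 1) u = 0 := by
            rw [List.count_eq_zero]
            intro hm
            have := (hx _ (hu.subset hm)).2
            omega
          omega
      have hA' : ∀ j, 1 ≤ j → j ≤ n - 1 → j ≠ i + 1 → epsWord j (a ++ i :: b) = 0 := by
        intro j hj1 hj2 hji
        have h0 : epsWord j (a ++ i :: b) ≤ 0 := by
          refine eps_le_iff.2 (fun t ht => ?_)
          by_cases hlen : b.length < t.length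
          · obtain ⟨t', ht', rfl⟩ := hsplitz t ht hlen
            have hxts := hxt t' ht'
            by_cases hji' : j = i
            · subst hji'
              have hb1 := hB (t' ++ (j + 1) :: b) hxts
              rw [if_pos (hlenx t')] at hb1
              rw [count_mid_eq (j + 1) t' b,
                count_mid' t' b (by omega : (j:ℕ) + 1 ≠ j)] at hb1
              rw [count_mid' t' b (by omega : (j:ℕ) ≠ j + 1), count_mid_eq j t' b]
              omega
            · by_cases hjm : j + 1 = i
              · have hCt := hC (by omega) (t' ++ (i + 1) :: b) hxts (hlenx t')
                have hieq : i - 1 = j := by omega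
                rw [hieq] at hCt
                rw [count_mid' t' b (by omega : (i:ℕ) + 1 ≠ i),
                  count_mid' t' b (by omega : (i:ℕ) + 1 ≠ j)] at hCt
                rw [count_mid' t' b (by omega : (i:ℕ) ≠ j)]
                rw [hjm, count_mid_eq i t' b]
                omega
              · have hAx := eps_le_iff.1 (le_of_eq (hA j hj1 hj2 hji'))
                  (t' ++ (i + 1) :: b) hxts
                rw [count_mid' t' b (by omega : (i:ℕ) + 1 ≠ j + 1),
                  count_mid' t' b (by omega : (i:ℕ) + 1 ≠ j)] at hAx
                rw [count_mid' t' b (by omega : (i:ℕ) ≠ j + 1),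
                  count_mid' t' b (by omega : (i:ℕ) ≠ j)]
                omega
          · push_neg at hlen
            have htb := hshortz t ht hlen
            by_cases hji' : j = i
            · subst hji'
              have := eps_le_iff.1 (le_of_eq hepsb) t htb
              omega
            · have := eps_le_iff.1 (le_of_eq (hA j hj1 hj2 hji')) t (htb.trans hbx)
              omega
        omega
      have hB' : ∀ t : List ℕ, t <:+ a ++ i :: b →
          List.count (i + 1 + 1) t ≤ List.count (i + 1) t +
            (if b.length < t.length then 1 else 0) := by
        intro t ht
        by_cases hlen : b.length < t.length
        · rw [if_pos hlen]
          obtain ⟨t', ht', rfl⟩ := hsplitz t ht hlen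
          have hk2 := key (t' ++ (i + 1) :: b) (hxt t' ht')
          rw [count_mid' t' b (by omega : (i:ℕ) + 1 ≠ i + 1 + 1),
            count_mid_eq (i + 1) t' b] at hk2
          rw [count_mid' t' b (by omega : (i:ℕ) ≠ i + 1 + 1),
            count_mid' t' b (by omega : (i:ℕ) ≠ i + 1)]
          omega
        · rw [if_neg hlen]
          push_neg at hlen
          have := key t ((hshortz t ht hlen).trans hbx)
          omega
      have hC' : 2 ≤ i + 1 → ∀ t : List ℕ, t <:+ a ++ i :: b → b.length < t.length →
          List.count (i + 1) t + 1 ≤ List.count (i + 1 - 1) t := by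
        intro _ t ht hlen
        obtain ⟨t', ht', rfl⟩ := hsplitz t ht hlen
        have hb1 := hB (t' ++ (i + 1) :: b) (hxt t' ht')
        rw [if_pos (hlenx t')] at hb1
        rw [count_mid_eq (i + 1) t' b, count_mid' t' b (by omega : (i:ℕ) + 1 ≠ i)] at hb1
        have hieq : i + 1 - 1 = i := by omega
        rw [hieq]
        rw [count_mid' t' b (by omega : (i:ℕ) ≠ i + 1), count_mid_eq i t' b]
        omega
      obtain ⟨r, hr1, hr2, z', hz', hhwz⟩ :=
        ih (i + 1) (a ++ i :: b) b.length (by omega) (by omega) (by omega) hz_mem hA' hB' hC'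
      refine ⟨r, by omega, hr2, z', ?_, hhwz⟩
      rw [eUp_go (by omega), hew]
      simpa using hz'

/-- `{1,…,n}` that is an `A_{n-1}` highest
weight vector, and let `ŵ` be obtained from `w` by deleting one occurrence of a
letter `i`.  Then there exists an index `r` with `i ≤ r ≤ n` such that
`e_{r-1} e_{r-2} ⋯ e_i (ŵ)` (interpreted as `ŵ` itself when `r = i`) is defined
and is an `A_{n-1}` highest weight vector. -/
theorem lose_letter (n : ℕ) (hn : 2 ≤ n) (w what : List ℕ) (i : ℕ)
    (hw : ∀ a ∈ w, 1 ≤ a ∧ a ≤ n) (hi1 : 1 ≤ i) (hi2 : i ≤ n)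
    (hhw : IsHW n w) (hdel : ∃ u v, w = u ++ i :: v ∧ what = u ++ v) :
    ∃ r, i ≤ r ∧ r ≤ n ∧ ∃ z, eUp i r what = some z ∧ IsHW n z := by
  obtain ⟨u, v, rfl, rfl⟩ := hdel
  have hwsuf : ∀ t' : List ℕ, t' <:+ u → t' ++ i :: v <:+ u ++ i :: v :=
    fun t' h => suffix_append_both _ h
  have hvx : v <:+ u ++ i :: v := (List.suffix_cons i v).trans (List.suffix_append u _)
  have hsplit : ∀ t : List ℕ, t <:+ u ++ v → v.length < t.length →
      ∃ t', t' <:+ u ∧ t = t' ++ v :=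
    fun t ht hlen => suffix_split ht (by omega)
  have hshort : ∀ t : List ℕ, t <:+ u ++ v → t.length ≤ v.length → t <:+ v :=
    fun t ht hlen => suffix_short ht hlen
  have hmem : ∀ a ∈ u ++ v, 1 ≤ a ∧ a ≤ n := by
    intro a ha
    rcases List.mem_append.1 ha with h | h
    · exact hw a (List.mem_append.2 (Or.inl h))
    · exact hw a (List.mem_append.2 (Or.inr (List.mem_cons_of_mem _ h)))
  have key : ∀ j : ℕ, 1 ≤ j → j ≤ n → ∀ t : List ℕ, t <:+ u ++ i :: v →
      List.count (j + 1) t ≤ List.count j t := by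
    intro j hj1 hj2 t ht
    by_cases hn1 : j ≤ n - 1
    · have := eps_le_iff.1 (le_of_eq (hhw j hj1 hn1)) t ht
      omega
    · have : List.count (j + 1) t = 0 := by
        rw [List.count_eq_zero]
        intro hm
        have := (hw _ (ht.subset hm)).2
        omega
      omega
  have hA : ∀ j, 1 ≤ j → j ≤ n - 1 → j ≠ i → epsWord j (u ++ v) = 0 := by
    intro j hj1 hj2 hji
    have h0 : epsWord j (u ++ v) ≤ 0 := by
      refine eps_le_iff.2 (fun t ht => ?_)
      by_cases hlen : v.length < t.length
      · obtain ⟨t', ht', rfl⟩ := hsplit t ht hlen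
        have hwt := hwsuf t' ht'
        by_cases hjm : j + 1 = i
        · have hieq : i = j + 1 := hjm.symm
          subst hieq
          have hk := key j hj1 (by omega) _ hwt
          rw [count_mid_eq (j + 1) t' v,
            count_mid' t' v (by omega : (j:ℕ) + 1 ≠ j)] at hk
          rw [List.count_append, List.count_append]
          omega
        · have hk := key j hj1 (by omega) _ hwt
          rw [count_mid' t' v (by omega : (i:ℕ) ≠ j + 1),
            count_mid' t' v (by omega : (i:ℕ) ≠ j)] at hk
          rw [List.count_append, List.count_append]
          omega
      · push_neg at hlen
        have := key j hj1 (by omega) t ((hshort t ht hlen).trans hvx)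
        omega
    omega
  have hB : ∀ t : List ℕ, t <:+ u ++ v →
      List.count (i + 1) t ≤ List.count i t + (if v.length < t.length then 1 else 0) := by
    intro t ht
    by_cases hlen : v.length < t.length
    · rw [if_pos hlen]
      obtain ⟨t', ht', rfl⟩ := hsplit t ht hlen
      have hk := key i hi1 hi2 _ (hwsuf t' ht')
      rw [count_mid' t' v (by omega : (i:ℕ) ≠ i + 1), count_mid_eq i t' v] at hk
      rw [List.count_append, List.count_append]
      omega
    · rw [if_neg hlen]
      push_neg at hlen
      have := key i hi1 hi2 t ((hshort t ht hlen).trans hvx)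
      omega
  have hC : 2 ≤ i → ∀ t : List ℕ, t <:+ u ++ v → v.length < t.length →
      List.count i t + 1 ≤ List.count (i - 1) t := by
    intro h2 t ht hlen
    obtain ⟨t', ht', rfl⟩ := hsplit t ht hlen
    have hk := key (i - 1) (by omega) (by omega) _ (hwsuf t' ht')
    have hieq : i - 1 + 1 = i := by omega
    rw [hieq] at hk
    rw [count_mid_eq i t' v, count_mid' t' v (by omega : (i:ℕ) ≠ i - 1)] at hk
    rw [List.count_append, List.count_append]
    omega
  exact main n n i (u ++ v) v.length (by omega) hi1 hi2 hmem hA hB hC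

end CrystalWords
end
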